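/- arXiv:2112.00574 — 8 statements merged into one kernel-verified Lean document; each statement's English description precedes it below -/
import Mathlib

section
/- Let A be a finite agenda with weights w : A → ℤ, B : Fin n → Finset A a profile, and F a nonempty finite set of outcomes. Then an outcome C ∈ F maximizes the total weight score ∑ᵢ ∑_{a ∈ Bᵢ ∩ C} w(a) over F if and only if C maximizes the total w-swap score ∑ᵢ −∑_{a ∈ Bᵢ \ C} w(a) over F. Hence the sum rule with the weight set scoring and the sum rule with the w-swap set scoring select exactly the same outcomes (Lemma 1(ii), equivalence of R_sum^weight and R_sum^w-swap). -/
lemma inter_sdiff_sum {A : Type*} [DecidableEq A] (w : A → ℤ) (b D : Finset A) :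
    (∑ a ∈ b ∩ D, w a) + (∑ a ∈ b \ D, w a) = ∑ a ∈ b, w a :=
  Finset.sum_inter_add_sum_sdiff b D w

/-- Lemma 1(ii), equivalence of the sum rule with the weight set scoring and the sum
rule with the w-swap set scoring: an outcome `C` in a nonempty finite feasible set `F`
maximizes the total weight score `∑ i, ∑ a ∈ B i ∩ C, w a` over `F` iff it maximizes
the total w-swap score `∑ i, -∑ a ∈ B i \ C, w a` over `F`. -/
theorem sum_weight_iff_sum_wswap {A : Type*} [Fintype A] [DecidableEq A]
    (w : A → ℤ) (n : ℕ) (B : Fin n → Finset A) (F : Finset (Finset A)) (hF : F.Nonempty)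
    (C : Finset A) (hC : C ∈ F) :
    (∀ D ∈ F, (∑ i, ∑ a ∈ B i ∩ D, w a) ≤ ∑ i, ∑ a ∈ B i ∩ C, w a) ↔
    (∀ D ∈ F, -(∑ i, ∑ a ∈ B i \ D, w a) ≤ -(∑ i, ∑ a ∈ B i \ C, w a)) := by
  have key : ∀ D : Finset A, (∑ i, ∑ a ∈ B i ∩ D, w a) + (∑ i, ∑ a ∈ B i \ D, w a)
      = ∑ i, ∑ a ∈ B i, w a := by
    intro D
    rw [← Finset.sum_add_distrib]
    exact Finset.sum_congr rfl fun i _ => inter_sdiff_sum w (B i) D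
  constructor
  · intro h D hD
    have h1 := h D hD
    have h2 := key D
    have h3 := key C
    linarith
  · intro h D hD
    have h1 := h D hD
    have h2 := key D
    have h3 := key C
    linarith
end

section
/- Let A be a finite agenda and let τ : Finset A → Finset (A × Bool) be the doubling map. Then for all B, C ⊆ A one has |τ(B) ∩ τ(C)| = agree(B, C), and consequently, for every profile B : Fin n → Finset A and nonempty finite feasible set F, an outcome C ∈ F maximizes the total agreement ∑ᵢ agree(Bᵢ, C) over F if and only if τ(C) maximizes the total simple score ∑ᵢ |τ(Bᵢ) ∩ C′| over C′ ∈ τ(F). Hence the median rule (maximizing total agreement) is an instance of the sum rule with the simple set scoring under the doubling translation (Lemma 1(i)). -/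
/-- The agreement of two subsets `B`, `C` of a finite agenda:
the number of items on which they coincide. -/
def agree {A : Type*} [Fintype A] [DecidableEq A] (B C : Finset A) : ℕ :=
  (Finset.univ.filter (fun a => a ∈ B ↔ a ∈ C)).card

/-- The doubling map `τ(B) = {(a, true) | a ∈ B} ∪ {(a, false) | a ∉ B}`. -/
def tau {A : Type*} [Fintype A] [DecidableEq A] (B : Finset A) : Finset (A × Bool) :=
  Finset.univ.filter (fun p => if p.2 then p.1 ∈ B else p.1 ∉ B)

lemma tau_inter_card {A : Type*} [Fintype A] [DecidableEq A] (B C : Finset A) :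
    (tau B ∩ tau C).card = agree B C := by
  classical
  unfold tau agree
  rw [← Finset.filter_and, Finset.card_filter, Finset.card_filter, Fintype.sum_prod_type]
  refine Finset.sum_congr rfl fun a _ => ?_
  by_cases hB : a ∈ B <;> by_cases hC : a ∈ C <;> simp [hB, hC]

/-- Lemma 1(i): `|τ(B) ∩ τ(C)| = agree(B, C)`, and consequently an outcome `C ∈ F`
maximizes the total agreement over `F` iff `τ(C)` maximizes the total simple score
over `τ(F)`; the median rule is an instance of the sum rule with the simple scoring. -/
theorem median_instance_of_sum_simple {A : Type*} [Fintype A] [DecidableEq A] :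
    (∀ B C : Finset A, (tau B ∩ tau C).card = agree B C) ∧
    (∀ (n : ℕ) (B : Fin n → Finset A) (F : Finset (Finset A)), F.Nonempty →
      ∀ C ∈ F,
        ((∀ D ∈ F, ∑ i, agree (B i) D ≤ ∑ i, agree (B i) C) ↔
         (∀ D' ∈ F.image tau, ∑ i, (tau (B i) ∩ D').card ≤ ∑ i, (tau (B i) ∩ tau C).card))) := by
  refine ⟨tau_inter_card, fun n B F hF C hC => ?_⟩
  constructor
  · intro h D' hD'
    obtain ⟨D, hD, rfl⟩ := Finset.mem_image.mp hD'
    simpa only [tau_inter_card] using h D hD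
  · intro h D hD
    simpa only [tau_inter_card] using h (tau D) (Finset.mem_image_of_mem tau hD)
end

section
/- Let A be a finite agenda with weights w : A → ℤ, extend the weights to A × Bool by Ŵ(a, t) = w(a), and let τ be the doubling map. Then for all B, C ⊆ A one has ∑_{x ∈ τ(B) ∩ τ(C)} Ŵ(x) = ∑_{a ∈ A, a ∈ B ↔ a ∈ C} w(a) (the weighted agreement of B and C), and consequently, for every profile B : Fin n → Finset A and nonempty finite feasible set F, an outcome C ∈ F maximizes the total weighted agreement ∑ᵢ ∑_{a : a ∈ Bᵢ ↔ a ∈ C} w(a) over F if and only if τ(C) maximizes the total weight score ∑ᵢ ∑_{x ∈ τ(Bᵢ) ∩ C′} Ŵ(x) over C′ ∈ τ(F). Hence the weighted median rule is an instance of the sum rule with the weight set scoring under the doubling translation (Lemma 1(ii)). -/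
/-- Lemma 1(ii): with the extended weights `Ŵ(a, t) = w a` on `A × Bool`,
`∑_{x ∈ τ(B) ∩ τ(C)} Ŵ(x)` equals the weighted agreement of `B` and `C`, and
consequently an outcome `C ∈ F` maximizes the total weighted agreement over `F` iff
`τ(C)` maximizes the total weight score over `τ(F)`; the weighted median rule is an
instance of the sum rule with the weight scoring. -/
theorem weighted_median_instance_of_sum_weight {A : Type*} [Fintype A] [DecidableEq A]
    (w : A → ℤ) :
    (∀ B C : Finset A,
      (∑ x ∈ tau B ∩ tau C, w x.1) =
        ∑ a ∈ Finset.univ.filter (fun a => a ∈ B ↔ a ∈ C), w a) ∧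
    (∀ (n : ℕ) (B : Fin n → Finset A) (F : Finset (Finset A)), F.Nonempty →
      ∀ C ∈ F,
        ((∀ D ∈ F,
            (∑ i, ∑ a ∈ Finset.univ.filter (fun a => a ∈ B i ↔ a ∈ D), w a) ≤
              ∑ i, ∑ a ∈ Finset.univ.filter (fun a => a ∈ B i ↔ a ∈ C), w a) ↔
         (∀ D' ∈ F.image tau,
            (∑ i, ∑ x ∈ tau (B i) ∩ D', w x.1) ≤
              ∑ i, ∑ x ∈ tau (B i) ∩ tau C, w x.1))) := by
  classical
  have h1 : ∀ B C : Finset A,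
      (∑ x ∈ tau B ∩ tau C, w x.1) =
        ∑ a ∈ Finset.univ.filter (fun a => a ∈ B ↔ a ∈ C), w a := by
    intro B C
    simp only [tau, ← Finset.filter_and, Finset.sum_filter, Fintype.sum_prod_type,
      Fintype.sum_bool]
    refine Finset.sum_congr rfl fun a _ => ?_
    by_cases hB : a ∈ B <;> by_cases hC : a ∈ C <;> simp [hB, hC]
  refine ⟨h1, fun n B F _ C _ => ?_⟩
  constructor
  · intro h D' hD'
    obtain ⟨D, hD, rfl⟩ := Finset.mem_image.mp hD'
    simp only [h1]
    exact h D hD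
  · intro h D hD
    have := h (tau D) (Finset.mem_image_of_mem tau hD)
    simpa only [h1] using this
end

section
/- Let A be a finite agenda with weights w : A → ℤ, extend the weights to A × Bool by Ŵ(a, t) = w(a), and define σbal(B) = {(a, true) | a ∈ B} ∪ {(a, false) | a ∈ A} and σout(C) = {(a, true) | a ∈ C} ∪ {(a, false) | a ∈ C}. Then for all B, C ⊆ A, the weighted agreement ∑_{x ∈ A×Bool, x ∈ σbal(B) ↔ x ∈ σout(C)} Ŵ(x) equals ∑_{a ∈ A} w(a) − ∑_{a ∈ B} w(a) + 2·∑_{a ∈ B ∩ C} w(a). Consequently, for every profile B : Fin n → Finset A and nonempty finite feasible set F, an outcome C ∈ F maximizes ∑ᵢ ∑_{a ∈ Bᵢ ∩ C} w(a) over F if and only if C maximizes the total weighted agreement ∑ᵢ ∑_{x : x ∈ σbal(Bᵢ) ↔ x ∈ σout(C)} Ŵ(x) over F. Hence the sum rule with the weight set scoring is an instance of the weighted median rule (Lemma 1(ii), reverse direction). -/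
/-- The ballot translation `σbal(B) = {(a, true) | a ∈ B} ∪ {(a, false) | a ∈ A}`. -/
def sigBal {A : Type*} [Fintype A] [DecidableEq A] (B : Finset A) : Finset (A × Bool) :=
  Finset.univ.filter (fun p => if p.2 then p.1 ∈ B else True)

/-- The outcome translation `σout(C) = {(a, true) | a ∈ C} ∪ {(a, false) | a ∈ C}`. -/
def sigOut {A : Type*} [Fintype A] [DecidableEq A] (C : Finset A) : Finset (A × Bool) :=
  Finset.univ.filter (fun p => p.1 ∈ C)

lemma agree_key {A : Type*} [Fintype A] [DecidableEq A] (w : A → ℤ) (B C : Finset A) :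
    (∑ x ∈ Finset.univ.filter (fun x : A × Bool => x ∈ sigBal B ↔ x ∈ sigOut C), w x.1) =
      (∑ a : A, w a) - (∑ a ∈ B, w a) + 2 * ∑ a ∈ B ∩ C, w a := by
  classical
  rw [Finset.sum_filter, Fintype.sum_prod_type]
  have hB : (∑ a ∈ B, w a) = ∑ a : A, if a ∈ B then w a else 0 := by
    rw [Finset.sum_ite_mem, Finset.univ_inter]
  have hBC : (∑ a ∈ B ∩ C, w a) = ∑ a : A, if a ∈ B ∩ C then w a else 0 := by
    rw [Finset.sum_ite_mem, Finset.univ_inter]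
  rw [hB, hBC, Finset.mul_sum, ← Finset.sum_sub_distrib, ← Finset.sum_add_distrib]
  refine Finset.sum_congr rfl fun a _ => ?_
  simp only [Fintype.sum_bool, sigBal, sigOut, Finset.mem_filter, Finset.mem_univ, true_and,
    Finset.mem_inter, if_true, if_false]
  by_cases hb : a ∈ B <;> by_cases hc : a ∈ C <;> simp [hb, hc] <;> ring

/-- Lemma 1(ii), reverse direction: with extended weights `Ŵ(a, t) = w a`, the
weighted agreement of `σbal(B)` and `σout(C)` equals
`∑_{a ∈ A} w a - ∑_{a ∈ B} w a + 2 ∑_{a ∈ B ∩ C} w a`, and consequently an outcome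
`C ∈ F` maximizes the total weight score over `F` iff it maximizes the total weighted
agreement of the translated ballots and outcome; the sum rule with the weight set
scoring is an instance of the weighted median rule. -/
theorem sum_weight_instance_of_weighted_median {A : Type*} [Fintype A] [DecidableEq A]
    (w : A → ℤ) :
    (∀ B C : Finset A,
      (∑ x ∈ Finset.univ.filter (fun x : A × Bool => x ∈ sigBal B ↔ x ∈ sigOut C), w x.1) =
        (∑ a : A, w a) - (∑ a ∈ B, w a) + 2 * ∑ a ∈ B ∩ C, w a) ∧
    (∀ (n : ℕ) (B : Fin n → Finset A) (F : Finset (Finset A)), F.Nonempty →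
      ∀ C ∈ F,
        ((∀ D ∈ F, (∑ i, ∑ a ∈ B i ∩ D, w a) ≤ ∑ i, ∑ a ∈ B i ∩ C, w a) ↔
         (∀ D ∈ F,
            (∑ i, ∑ x ∈ Finset.univ.filter
                (fun x : A × Bool => x ∈ sigBal (B i) ↔ x ∈ sigOut D), w x.1) ≤
              ∑ i, ∑ x ∈ Finset.univ.filter
                (fun x : A × Bool => x ∈ sigBal (B i) ↔ x ∈ sigOut C), w x.1))) := by
  refine ⟨agree_key w, fun n B F _ C _ => ?_⟩
  have h : ∀ D : Finset A,
      (∑ i, ∑ x ∈ Finset.univ.filter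
          (fun x : A × Bool => x ∈ sigBal (B i) ↔ x ∈ sigOut D), w x.1) =
        (∑ i, ((∑ a : A, w a) - ∑ a ∈ B i, w a)) + 2 * ∑ i, ∑ a ∈ B i ∩ D, w a := by
    intro D
    rw [Finset.mul_sum, ← Finset.sum_add_distrib]
    exact Finset.sum_congr rfl fun i _ => by rw [agree_key w (B i) D]
  constructor
  · intro hmax D hD
    rw [h D, h C]
    have := hmax D hD
    linarith
  · intro hmax D hD
    have := hmax D hD
    rw [h D, h C] at this
    linarith
end

section
/- Let α be a finite type with m elements. For strict linear orders r and r′ on α (relations satisfying IsStrictTotalOrder), define the concordance c(r, r′) = |{(x, y) | r x y ∧ r′ x y}| and the Kendall tau (swap) distance d(r, r′) = |{(x, y) | r x y ∧ r′ y x}|. Then for all strict linear orders r, r′ on α, c(r, r′) + d(r, r′) = m(m−1)/2, and consequently, for every profile r₁, …, rₙ of strict linear orders on α, a strict linear order r minimizes the total swap distance ∑ᵢ d(rᵢ, r) among all strict linear orders on α if and only if r maximizes the total concordance ∑ᵢ c(rᵢ, r) among all strict linear orders on α. Hence the utilitarian aggregation rule with swap distance (Kemeny) is an instance of the median rule (Proposition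 2, third item). -/
/-- The concordance of two binary relations: the number of ordered pairs `(x, y)`
with `r x y` and `r' x y`. -/
noncomputable def concordance {α : Type*} (r r' : α → α → Prop) : ℕ :=
  Nat.card {p : α × α // r p.1 p.2 ∧ r' p.1 p.2}

/-- The Kendall tau (swap) distance of two binary relations: the number of ordered
pairs `(x, y)` with `r x y` and `r' y x`. -/
noncomputable def swapDist {α : Type*} (r r' : α → α → Prop) : ℕ :=
  Nat.card {p : α × α // r p.1 p.2 ∧ r' p.2 p.1}

open Finset in
lemma aux_key {α : Type*} [Fintype α] {r r' : α → α → Prop}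
    (hr : IsStrictTotalOrder α r) (hr' : IsStrictTotalOrder α r') :
    concordance r r' + swapDist r r' = Fintype.card α * (Fintype.card α - 1) / 2 := by
  classical
  have hasymm : ∀ x y, r x y → ¬ r y x := fun x y hxy hyx =>
    hr.irrefl x (hr.trans _ _ _ hxy hyx)
  have hne : ∀ x y, r x y → x ≠ y := fun x y hxy h => hr.irrefl x (h ▸ hxy)
  have hc : concordance r r' = (univ.filter fun p : α × α => r p.1 p.2 ∧ r' p.1 p.2).card := by
    rw [concordance, Nat.card_eq_fintype_card, Fintype.card_subtype]
  have hd : swapDist r r' = (univ.filter fun p : α × α => r p.1 p.2 ∧ r' p.2 p.1).card := by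
    rw [swapDist, Nat.card_eq_fintype_card, Fintype.card_subtype]
  set A := (univ.filter fun p : α × α => r p.1 p.2 ∧ r' p.1 p.2)
  set B := (univ.filter fun p : α × α => r p.1 p.2 ∧ r' p.2 p.1)
  set R := (univ.filter fun p : α × α => r p.1 p.2)
  set R' := (univ.filter fun p : α × α => r p.2 p.1)
  have hAB : A.card + B.card = R.card := by
    rw [← Finset.card_union_of_disjoint]
    · congr 1
      ext p
      simp only [A, B, R, Finset.mem_union, Finset.mem_filter, Finset.mem_univ, true_and]
      constructor
      · rintro (⟨h, _⟩ | ⟨h, _⟩) <;> exact h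
      · intro h
        rcases (have := hr'; trichotomous_of r' p.1 p.2) with h' | h' | h'
        · exact Or.inl ⟨h, h'⟩
        · exact absurd h' (hne _ _ h)
        · exact Or.inr ⟨h, h'⟩
    · rw [Finset.disjoint_left]
      rintro p hp hp'
      simp only [A, B, Finset.mem_filter] at hp hp'
      exact hr'.irrefl p.1 (hr'.trans _ _ _ hp.2.2 hp'.2.2)
  have hRR' : R.card = R'.card := by
    apply Finset.card_bij (fun p _ => Prod.swap p)
    · intro p hp
      simp only [R, R', Finset.mem_filter, Finset.mem_univ, true_and] at *
      exact hp
    · intro p hp q hq h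
      exact Prod.swap_injective h
    · intro p hp
      refine ⟨Prod.swap p, ?_, by simp⟩
      simp only [R, R', Finset.mem_filter, Finset.mem_univ, true_and] at *
      exact hp
  have hRtot : R.card + R'.card = Fintype.card α * (Fintype.card α - 1) := by
    rw [← Finset.card_union_of_disjoint]
    · have : R ∪ R' = (univ : Finset α).offDiag := by
        ext p
        simp only [R, R', Finset.mem_union, Finset.mem_filter, Finset.mem_univ, true_and,
          Finset.mem_offDiag]
        constructor
        · rintro (h | h)
          · exact hne _ _ h
          · exact fun he => hne _ _ h he.symm
        · intro h
          rcases (have := hr; trichotomous_of r p.1 p.2) with h' | h' | h'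
          · exact Or.inl h'
          · exact absurd h' h
          · exact Or.inr h'
      rw [this, Finset.offDiag_card, Finset.card_univ, Nat.mul_sub_one]
    · rw [Finset.disjoint_left]
      rintro p hp hp'
      simp only [R, R', Finset.mem_filter] at hp hp'
      exact hasymm _ _ hp.2 hp'.2
  have h2 : 2 * R.card = Fintype.card α * (Fintype.card α - 1) := by omega
  omega

/-- Proposition 2, third item: for strict linear orders on a finite type with `m`
elements, `c(r, r') + d(r, r') = m(m-1)/2`, and consequently a strict linear order `r`
minimizes the total swap distance to a profile of strict linear orders iff it maximizes
the total concordance; the utilitarian aggregation rule with swap distance (Kemeny) is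
an instance of the median rule. -/
theorem kemeny_instance_of_median {α : Type*} [Fintype α] (m : ℕ)
    (hm : Fintype.card α = m) :
    (∀ r r' : α → α → Prop, IsStrictTotalOrder α r → IsStrictTotalOrder α r' →
      concordance r r' + swapDist r r' = m * (m - 1) / 2) ∧
    (∀ (n : ℕ) (rs : Fin n → α → α → Prop), (∀ i, IsStrictTotalOrder α (rs i)) →
      ∀ r : α → α → Prop, IsStrictTotalOrder α r →
        ((∀ r' : α → α → Prop, IsStrictTotalOrder α r' →
            ∑ i, swapDist (rs i) r ≤ ∑ i, swapDist (rs i) r') ↔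
         (∀ r' : α → α → Prop, IsStrictTotalOrder α r' →
            ∑ i, concordance (rs i) r' ≤ ∑ i, concordance (rs i) r))) := by
  subst hm
  have key := fun r r' hr hr' => @aux_key α _ r r' hr hr'
  refine ⟨key, ?_⟩
  intro n rs hrs r hrK
  have hsum : ∀ r' : α → α → Prop, IsStrictTotalOrder α r' →
      ∑ i, concordance (rs i) r' + ∑ i, swapDist (rs i) r' =
        n * (Fintype.card α * (Fintype.card α - 1) / 2) := by
    intro r' hr'
    rw [← Finset.sum_add_distrib]
    simp [key _ _ (hrs _) hr', Finset.sum_const]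
  constructor
  · intro h r' hr'
    have h1 := hsum r hrK
    have h2 := hsum r' hr'
    have := h r' hr'
    omega
  · intro h r' hr'
    have h1 := hsum r hrK
    have h2 := hsum r' hr'
    have := h r' hr'
    omega
end

section
/- Let A be a finite agenda and let τ : Finset A → Finset (A × Bool) be the doubling map. For every profile B : Fin n → Finset A with n ≥ 1 and every nonempty finite feasible set F, an outcome C ∈ F maximizes minᵢ agree(Bᵢ, C) over F if and only if τ(C) maximizes minᵢ |τ(Bᵢ) ∩ C′| over C′ ∈ τ(F). Hence the egalitarian median rule (MaxHam / d_H-max, maximizing the minimum agreement) is an instance of the egalitarian rule with the simple set scoring (Proposition 4, first item). -/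
/-- The minimum of a family indexed by `Fin n` for `n ≥ 1`. -/
def minOver {n : ℕ} (hn : 1 ≤ n) {β : Type*} [LinearOrder β] (f : Fin n → β) : β :=
  Finset.univ.inf' ⟨⟨0, hn⟩, Finset.mem_univ _⟩ f


/-- Proposition 4, first item: an outcome `C ∈ F` maximizes the minimum agreement
`min_i agree(B i, C)` over `F` iff `τ(C)` maximizes the minimum simple score
`min_i |τ(B i) ∩ C'|` over `C' ∈ τ(F)`; the egalitarian median rule (MaxHam / d_H-max)
is an instance of the egalitarian rule with the simple set scoring. -/
theorem maxham_instance_of_egal_simple {A : Type*} [Fintype A] [DecidableEq A]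
    (n : ℕ) (hn : 1 ≤ n) (B : Fin n → Finset A)
    (F : Finset (Finset A)) (hF : F.Nonempty) (C : Finset A) (hC : C ∈ F) :
    (∀ D ∈ F, minOver hn (fun i => agree (B i) D) ≤ minOver hn (fun i => agree (B i) C)) ↔
    (∀ D' ∈ F.image tau,
      minOver hn (fun i => (tau (B i) ∩ D').card) ≤
        minOver hn (fun i => (tau (B i) ∩ tau C).card)) := by
  have key : ∀ D : Finset A, (fun i => (tau (B i) ∩ tau D).card) = (fun i => agree (B i) D) := by
    intro D; funext i; exact tau_inter_card (B i) D
  constructor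
  · intro h D' hD'
    obtain ⟨D, hD, rfl⟩ := Finset.mem_image.mp hD'
    rw [key, key]; exact h D hD
  · intro h D hD
    have := h (tau D) (Finset.mem_image_of_mem tau hD)
    rwa [key, key] at this
end

section
/- Let A be a finite agenda, B : Fin n → Finset A a profile with n ≥ 1 in which all ballots have the same cardinality, |Bᵢ| = k for all i, and F a nonempty finite feasible set. Then an outcome C ∈ F maximizes minᵢ |Bᵢ ∩ C| over F if and only if C maximizes minᵢ (−|Bᵢ \ C| : ℤ) over F (equivalently, minimizes maxᵢ |Bᵢ \ C| over F). Hence, on profiles with equal-size ballots (such as rational scheduling ballots), the egalitarian rule with the simple set scoring and the egalitarian rule with the swap set scoring coincide, so the egalitarian aggregation function with swap cost is an instance of the egalitarian rule with the simple set scoring (Proposition 4, second item). -/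
lemma cast_minOver {n : ℕ} (hn : 1 ≤ n) (f : Fin n → ℕ) :
    minOver hn (fun i => ((f i : ℤ))) = ((minOver hn f : ℕ) : ℤ) := by
  unfold minOver
  exact (Finset.apply_inf'_eq_inf'_comp _ (Nat.cast : ℕ → ℤ)
    (fun x y => by simp [Nat.cast_min])).symm

lemma minOver_swap_eq {A : Type*} [Fintype A] [DecidableEq A]
    {n : ℕ} (hn : 1 ≤ n) (B : Fin n → Finset A) (k : ℕ) (hk : ∀ i, (B i).card = k)
    (D : Finset A) :
    minOver hn (fun i => -(((B i \ D).card : ℤ))) =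
      (minOver hn (fun i => (B i ∩ D).card) : ℤ) - k := by
  have key : ∀ i, -(((B i \ D).card : ℤ)) = ((B i ∩ D).card : ℤ) - k := by
    intro i
    have hsub : B i ∩ D ⊆ B i := Finset.inter_subset_left
    have : (B i \ D).card = (B i).card - (B i ∩ D).card := by
      rw [← Finset.card_sdiff_of_subset hsub]
      congr 1
      exact (Finset.sdiff_inter_self_left (B i) D).symm
    have hle : (B i ∩ D).card ≤ (B i).card := Finset.card_le_card hsub
    rw [this]
    rw [Nat.cast_sub hle, hk i]
    ring
  unfold minOver
  rw [show (fun i => -(((B i \ D).card : ℤ))) =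
      (fun m : ℕ => (m : ℤ) - k) ∘ (fun i => (B i ∩ D).card) by
    funext i; exact key i]
  erw [← Finset.apply_inf'_eq_inf'_comp _ (fun m : ℕ => (m : ℤ) - k)]
  · exact congrArg (· - (k : ℤ)) (cast_minOver hn _).symm
  · intro x y
    simp only [min_def]
    split_ifs <;> omega

/-- Proposition 4, second item (supporting lemma): on profiles where every ballot has
the same cardinality `k`, an outcome `C ∈ F` maximizes `min_i |B i ∩ C|` over the
nonempty finite feasible set `F` iff it maximizes `min_i (-|B i \ C| : ℤ)` over `F`;
hence the egalitarian rule with the simple set scoring and the egalitarian rule with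
the swap set scoring coincide on such profiles, and the egalitarian aggregation
function with swap cost is an instance of the egalitarian rule with the simple
set scoring. -/
theorem egal_simple_iff_egal_swap_of_const_card {A : Type*} [Fintype A] [DecidableEq A]
    (n : ℕ) (hn : 1 ≤ n) (B : Fin n → Finset A) (k : ℕ) (hk : ∀ i, (B i).card = k)
    (F : Finset (Finset A)) (hF : F.Nonempty) (C : Finset A) (hC : C ∈ F) :
    (∀ D ∈ F, minOver hn (fun i => (B i ∩ D).card) ≤
        minOver hn (fun i => (B i ∩ C).card)) ↔
    (∀ D ∈ F, minOver hn (fun i => -(((B i \ D).card : ℤ))) ≤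
        minOver hn (fun i => -(((B i \ C).card : ℤ)))) := by
  constructor <;> intro h D hD <;> have := h D hD
  · rw [minOver_swap_eq hn B k hk, minOver_swap_eq hn B k hk,
      cast_minOver, cast_minOver]
    omega
  · rw [minOver_swap_eq hn B k hk, minOver_swap_eq hn B k hk,
      cast_minOver, cast_minOver] at this
    omega
end

section
/- Let A be a finite agenda, F a nonempty set of outcomes (finite subsets of A), and L a list enumerating the elements of A without duplicates. Define the greedy procedure as a fold over L on state pairs (S, X) of finite subsets of A starting from (∅, ∅): when processing item a, accept a (replacing X by X ∪ {a}) if there exists some C ∈ F with C ∩ (S ∪ {a}) = (X ∪ {a}) ∩ (S ∪ {a}), and otherwise leave X unchanged; in either case replace S by S ∪ {a}. Then the final outcome X produced by the procedure belongs to F. Hence the ranked rules of Algorithm 1 always output a feasible outcome, for any processing order of the agenda. -/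
open scoped Classical in
/-- One step of the greedy procedure of Algorithm 1, on state pairs `(S, X)` where `S`
is the set of already-processed items and `X` is the current partial outcome: item `a`
is accepted iff the partial decision restricted to the processed items extends to some
feasible outcome in `F`. -/
noncomputable def greedyStep {A : Type*} [DecidableEq A] (F : Set (Finset A))
    (p : Finset A × Finset A) (a : A) : Finset A × Finset A :=
  (insert a p.1,
    if ∃ C ∈ F, C ∩ insert a p.1 = insert a p.2 ∩ insert a p.1 then insert a p.2
    else p.2)

/-- The ranked rules of Algorithm 1 always output a feasible outcome: for any nonempty
feasible set `F` and any enumeration `L` of the agenda without duplicates, the outcome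
produced by folding the greedy step from `(∅, ∅)` over `L` belongs to `F`. -/
theorem greedy_outcome_feasible {A : Type*} [Fintype A] [DecidableEq A]
    (F : Set (Finset A)) (hF : F.Nonempty)
    (L : List A) (hnd : L.Nodup) (hall : ∀ a : A, a ∈ L) :
    (L.foldl (greedyStep F) (∅, ∅)).2 ∈ F := by
  classical
  have key : ∀ (L : List A) (p : Finset A × Finset A), L.Nodup →
      (∀ a ∈ L, a ∉ p.1) → p.2 ⊆ p.1 → (∃ C ∈ F, C ∩ p.1 = p.2 ∩ p.1) →
      (L.foldl (greedyStep F) p).1 = p.1 ∪ L.toFinset ∧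
      (L.foldl (greedyStep F) p).2 ⊆ (L.foldl (greedyStep F) p).1 ∧
      ∃ C ∈ F, C ∩ (L.foldl (greedyStep F) p).1 = (L.foldl (greedyStep F) p).2 ∩ (L.foldl (greedyStep F) p).1 := by
    intro L
    induction L with
    | nil => intro p _ _ hsub hinv; simpa using ⟨hsub, hinv⟩
    | cons a t ih =>
      intro p hnd hnotin hsub hinv
      have haP : a ∉ p.1 := hnotin a List.mem_cons_self
      have haX : a ∉ p.2 := fun h => haP (hsub h)
      have hstep : ∀ b ∈ t, b ∉ (greedyStep F p a).1 := by
        intro b hb hmem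
        simp only [greedyStep, Finset.mem_insert] at hmem
        rcases hmem with rfl | hmem
        · exact (List.nodup_cons.mp hnd).1 hb
        · exact hnotin b (List.mem_cons_of_mem a hb) hmem
      have hsub' : (greedyStep F p a).2 ⊆ (greedyStep F p a).1 := by
        simp only [greedyStep]
        split
        · exact Finset.insert_subset_insert a hsub
        · exact hsub.trans (Finset.subset_insert a p.1)
      have hinv' : ∃ C ∈ F, C ∩ (greedyStep F p a).1 = (greedyStep F p a).2 ∩ (greedyStep F p a).1 := by
        simp only [greedyStep]
        split
        · next h => simpa using h
        · next h =>
          obtain ⟨C, hC, hCe⟩ := hinv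
          refine ⟨C, hC, ?_⟩
          have haC : a ∉ C := by
            intro haC
            apply h
            refine ⟨C, hC, ?_⟩
            have hpt : ∀ x, x ∈ C ∧ x ∈ p.1 ↔ x ∈ p.2 ∧ x ∈ p.1 := by
              intro x
              constructor
              · intro hx; have : x ∈ p.2 ∩ p.1 := hCe ▸ Finset.mem_inter.mpr hx
                exact Finset.mem_inter.mp this
              · intro hx; have : x ∈ C ∩ p.1 := hCe ▸ Finset.mem_inter.mpr hx
                exact Finset.mem_inter.mp this
            ext x
            simp only [Finset.mem_inter, Finset.mem_insert]
            by_cases hxa : x = a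
            · subst hxa; simp [haC]
            · simp only [hxa, false_or]; exact hpt x
          rw [Finset.inter_insert_of_notMem haC, hCe]
          ext x
          simp only [Finset.mem_inter, Finset.mem_insert]
          constructor
          · rintro ⟨hx1, hx2⟩; exact ⟨hx1, Or.inr hx2⟩
          · rintro ⟨hx1, (rfl | hx2)⟩
            · exact absurd hx1 haX
            · exact ⟨hx1, hx2⟩
      have := ih (greedyStep F p a) (List.nodup_cons.mp hnd).2 hstep hsub' hinv'
      simp only [List.foldl_cons]
      refine ⟨?_, this.2⟩
      rw [this.1]
      simp only [greedyStep, List.toFinset_cons]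
      ext x
      simp only [Finset.mem_union, Finset.mem_insert]
      tauto
  obtain ⟨C0, hC0⟩ := hF
  have h := key L (∅, ∅) hnd (by simp) (by simp) ⟨C0, hC0, by simp⟩
  have h1 : (L.foldl (greedyStep F) (∅, ∅)).1 = Finset.univ := by
    rw [h.1]
    ext x; simp [hall x]
  obtain ⟨C, hC, hCe⟩ := h.2.2
  rw [h1] at hCe
  simp only [Finset.inter_univ] at hCe
  rwa [← hCe]
end
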